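/- Let n ∈ ℕ, t, λ ∈ ℂ, and let p be a monic polynomial of degree n over ℂ satisfying p''(x) + (2x² + t)·p'(x) − 2n·x·p(x) = λ·p(x) for all x ∈ ℂ. Suppose there exists a polynomial r over ℂ with r''(x) + (2x² + t)·r'(x) − 2n·x·r(x) − λ·r(x) = p(x) for all x ∈ ℂ (a polynomial generalized eigenvector, i.e. λ is a repeated eigenvalue). Then, with F(x) := p(x)·exp(θ(x;t)), the ray integrals I_k(F²) for k ∈ {1,3,5} converge and are all equal: I₁(F²) = I₃(F²) = I₅(F²). Equivalently, both wedge-contour integrals ∫_γ F(x)² dx = 0 and ∫_γ̃ F(x)² dx = 0 vanish. -/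

import Mathlib

/-!
Put `W = p r' - p' r`, the Wronskian of the eigenvector and the generalized eigenvector. The
two differential equations give `W' + (2x² + t) W = p²`, i.e. `(W e^{2θ})' = F²`, so `W e^{2θ}`
is a primitive of `F²` in the whole plane. Along a ray of direction `ω_k` with `k` odd,
`ω_k³ = -1`, so `e^{θ}` decays like `exp(-r³/3)` and beats every polynomial factor. Hence each
ray integral `I_k(F²)` converges and equals `-W(0)`, independently of `k`.
-/

/-- Direction at infinity of argument kπ/3. -/
noncomputable def rayDir (k : ℕ) : ℂ := Complex.exp ((k : ℂ) * Real.pi * Complex.I / 3)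

/-- Ray integral I_k(f) = ω_k · ∫₀^∞ f(r·ω_k) dr. -/
noncomputable def rayIntegral (k : ℕ) (f : ℂ → ℂ) : ℂ :=
  rayDir k * ∫ r in Set.Ioi (0 : ℝ), f ((r : ℂ) * rayDir k)

open MeasureTheory Filter Set Asymptotics Polynomial Complex Topology

lemma rayDir_pow_three_of_odd {k : ℕ} (hk : Odd k) : rayDir k ^ 3 = -1 := by
  rw [rayDir, ← exp_nat_mul, show ((3 : ℕ) : ℂ) * ((k : ℂ) * Real.pi * I / 3)
    = k * (Real.pi * I) by push_cast; ring, exp_nat_mul, exp_pi_mul_I, hk.neg_one_pow]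

lemma norm_eq_one_of_pow_three_eq_neg_one {w : ℂ} (hw : w ^ 3 = -1) : ‖w‖ = 1 := by
  have : ‖w‖ ^ 3 = 1 := by rw [← norm_pow, hw, norm_neg, norm_one]
  exact (pow_eq_one_iff_of_nonneg (norm_nonneg w) three_ne_zero).mp this

noncomputable def theta (t z : ℂ) : ℂ := z ^ 3 / 3 + t * z / 2

lemma hasDerivAt_theta (t z : ℂ) : HasDerivAt (theta t) (z ^ 2 + t / 2) z := by
  refine (((hasDerivAt_pow 3 z).div_const 3).fun_add
    (((hasDerivAt_id' z).const_mul t).div_const 2)).congr_deriv ?_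
  push_cast
  ring

@[fun_prop]
lemma continuous_theta (t : ℂ) : Continuous (theta t) := by
  unfold theta; fun_prop

lemma re_theta_ofReal_mul (t : ℂ) {w : ℂ} (hw : w ^ 3 = -1) (s : ℝ) :
    (theta t (s * w)).re = -s ^ 3 / 3 + (t * w).re / 2 * s := by
  have : theta t (s * w) = ((-s ^ 3 / 3 : ℝ) : ℂ) + (s / 2 : ℝ) * (t * w) := by
    rw [theta, mul_pow, hw]; push_cast; ring
  rw [this, add_re, ofReal_re, re_ofReal_mul]
  ring

lemma isBigO_exp_theta_ray (t : ℂ) {w : ℂ} (hw : w ^ 3 = -1) :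
    (fun s : ℝ => exp (theta t (s * w))) =O[atTop] fun s => Real.exp (-2 * s) := by
  refine IsBigO.of_bound 1 ?_
  filter_upwards [eventually_ge_atTop (max 1 (3 * ((t * w).re / 2 + 2)))] with s hs_ge
  have h1 : 1 ≤ s := le_of_max_le_left hs_ge
  have h2 : 3 * ((t * w).re / 2 + 2) ≤ s := le_of_max_le_right hs_ge
  rw [norm_exp, re_theta_ofReal_mul t hw, one_mul, Real.norm_of_nonneg (Real.exp_pos _).le]
  have hs : 0 ≤ s := zero_le_one.trans h1
  refine Real.exp_le_exp.mpr ?_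
  nlinarith [mul_nonneg hs (sub_nonneg.mpr h2), mul_nonneg hs (mul_nonneg hs (sub_nonneg.mpr h1))]

lemma isBigO_eval_ray (a : ℂ[X]) {w : ℂ} (hw : ‖w‖ = 1) :
    (fun s : ℝ => a.eval (s * w)) =O[atTop] Real.exp := by
  have hpoly : (fun z => a.eval z) =O[Bornology.cobounded ℂ] fun z => z ^ a.natDegree := by
    simpa using isBigO_cobounded_of_degree_le (P := a) (Q := X ^ a.natDegree)
      (by rw [degree_X_pow]; exact degree_le_natDegree)
  have hray : Tendsto (fun s : ℝ => (s : ℂ) * w) atTop (Bornology.cobounded ℂ) := by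
    rw [← tendsto_norm_atTop_iff_cobounded]
    simpa [hw] using tendsto_abs_atTop_atTop
  have hpow : (fun s : ℝ => ((s : ℂ) * w) ^ a.natDegree) =O[atTop] fun s => s ^ a.natDegree :=
    IsBigO.of_bound 1 (Eventually.of_forall fun s => by simp [hw])
  refine (hpoly.comp_tendsto hray).trans (hpow.trans ?_)
  simpa using (isLittleO_pow_exp_pos_mul_atTop a.natDegree one_pos).isBigO

lemma isBigO_eval_mul_exp_theta_ray (a : ℂ[X]) (t : ℂ) {w : ℂ} (hw : w ^ 3 = -1) :
    (fun s : ℝ => a.eval (s * w) * exp (theta t (s * w))) =O[atTop] fun s => Real.exp (-s) :=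
  ((isBigO_eval_ray a (norm_eq_one_of_pow_three_eq_neg_one hw)).mul
    (isBigO_exp_theta_ray t hw)).congr_right fun s => by rw [← Real.exp_add]; ring_nf

lemma tendsto_eval_mul_exp_theta_ray (a : ℂ[X]) (t : ℂ) {w : ℂ} (hw : w ^ 3 = -1) :
    Tendsto (fun s : ℝ => a.eval (s * w) * exp (theta t (s * w))) atTop (𝓝 0) :=
  (isBigO_eval_mul_exp_theta_ray a t hw).trans_tendsto Real.tendsto_exp_neg_atTop_nhds_zero

lemma tendsto_eval_mul_exp_theta_sq_ray (a : ℂ[X]) (t : ℂ) {w : ℂ} (hw : w ^ 3 = -1) :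
    Tendsto (fun s : ℝ => a.eval (s * w) * exp (theta t (s * w)) ^ 2) atTop (𝓝 0) := by
  simpa [sq, mul_assoc] using
    (tendsto_eval_mul_exp_theta_ray a t hw).mul (tendsto_eval_mul_exp_theta_ray 1 t hw)

lemma integrableOn_sq_eval_mul_exp_theta_ray (a : ℂ[X]) (t : ℂ) {w : ℂ} (hw : w ^ 3 = -1) :
    IntegrableOn (fun s : ℝ => (a.eval (s * w) * exp (theta t (s * w))) ^ 2) (Ioi 0) := by
  have hcont : Continuous fun s : ℝ => (a.eval (s * w) * exp (theta t (s * w))) ^ 2 := by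
    fun_prop
  have hO : (fun s : ℝ => ‖(a.eval (s * w) * exp (theta t (s * w))) ^ 2‖) =O[atTop]
      fun s => Real.exp (-2 * s) :=
    ((isBigO_eval_mul_exp_theta_ray a t hw).pow 2).norm_left.congr_right fun s => by
      rw [← Real.exp_nat_mul]; ring_nf
  exact (integrable_norm_iff hcont.aestronglyMeasurable).mp
    (integrable_of_isBigO_exp_neg two_pos hcont.norm.continuousOn hO)

lemma hasDerivAt_eval_mul_exp_theta_sq (q : ℂ[X]) (t z : ℂ) :
    HasDerivAt (fun z => q.eval z * exp (theta t z) ^ 2)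
      ((q.derivative.eval z + (2 * z ^ 2 + t) * q.eval z) * exp (theta t z) ^ 2) z := by
  refine ((q.hasDerivAt z).fun_mul (((hasDerivAt_theta t z).cexp).fun_pow 2)).congr_deriv ?_
  push_cast
  ring

lemma eval_derivative_wronskian_add_mul {R : Type*} [CommRing R] {p r : R[X]} {x a b lam : R}
    (hp : p.derivative.derivative.eval x + a * p.derivative.eval x - b * p.eval x
      = lam * p.eval x)
    (hr : r.derivative.derivative.eval x + a * r.derivative.eval x - b * r.eval x
      - lam * r.eval x = p.eval x) :
    (wronskian p r).derivative.eval x + a * (wronskian p r).eval x = p.eval x ^ 2 := by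
  simp only [wronskian, derivative_sub, derivative_mul, eval_sub, eval_add, eval_mul]
  linear_combination p.eval x * hr - r.eval x * hp

lemma rayIntegral_eq_neg_of_hasDerivAt {k : ℕ} {f Φ : ℂ → ℂ}
    (hΦ : ∀ z, HasDerivAt Φ (f z) z)
    (hf : IntegrableOn (fun s : ℝ => f (s * rayDir k)) (Ioi 0))
    (hlim : Tendsto (fun s : ℝ => Φ (s * rayDir k)) atTop (𝓝 0)) :
    rayIntegral k f = -Φ 0 := by
  set w := rayDir k
  have hderiv (s : ℝ) : HasDerivAt (fun s : ℝ => Φ (s * w)) (w * f (s * w)) s := by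
    have h := (hΦ ((s : ℂ) * w)).comp (s : ℂ) ((hasDerivAt_id (s : ℂ)).mul_const w)
    simpa [mul_comm] using h.comp_ofReal
  have hFTC := integral_Ioi_of_hasDerivAt_of_tendsto' (fun s _ => hderiv s) (hf.const_mul w) hlim
  rw [integral_const_mul] at hFTC
  simp [rayIntegral, w, hFTC]

theorem repeated_eigenvalue_gives_vanishing_integrals_general
    (n : ℕ) (t lam : ℂ) (p : Polynomial ℂ)
    (heq : ∀ x : ℂ, (p.derivative.derivative).eval x
        + (2 * x ^ 2 + t) * p.derivative.eval x
        - 2 * (n : ℂ) * x * p.eval x = lam * p.eval x)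
    (r : Polynomial ℂ)
    (hr : ∀ x : ℂ, (r.derivative.derivative).eval x
        + (2 * x ^ 2 + t) * r.derivative.eval x
        - 2 * (n : ℂ) * x * r.eval x - lam * r.eval x = p.eval x) :
    (∀ k ∈ ({1, 3, 5} : Set ℕ),
      MeasureTheory.IntegrableOn
        (fun s : ℝ => (p.eval ((s : ℂ) * rayDir k)
            * Complex.exp (((s : ℂ) * rayDir k) ^ 3 / 3 + t * ((s : ℂ) * rayDir k) / 2)) ^ 2)
        (Set.Ioi 0)) ∧
    rayIntegral 1 (fun x => (p.eval x * Complex.exp (x ^ 3 / 3 + t * x / 2)) ^ 2)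
      = rayIntegral 3 (fun x => (p.eval x * Complex.exp (x ^ 3 / 3 + t * x / 2)) ^ 2) ∧
    rayIntegral 3 (fun x => (p.eval x * Complex.exp (x ^ 3 / 3 + t * x / 2)) ^ 2)
      = rayIntegral 5 (fun x => (p.eval x * Complex.exp (x ^ 3 / 3 + t * x / 2)) ^ 2) := by
  have hintegrable {k : ℕ} (hk : Odd k) :
      IntegrableOn (fun s : ℝ => (p.eval (s * rayDir k) * exp (theta t (s * rayDir k))) ^ 2)
        (Ioi 0) :=
    integrableOn_sq_eval_mul_exp_theta_ray p t (rayDir_pow_three_of_odd hk)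
  have hrayIntegral {k : ℕ} (hk : Odd k) :
      rayIntegral k (fun z => (p.eval z * exp (theta t z)) ^ 2) = -(wronskian p r).eval 0 := by
    have hprimitive (z : ℂ) : HasDerivAt (fun z => (wronskian p r).eval z * exp (theta t z) ^ 2)
        ((p.eval z * exp (theta t z)) ^ 2) z :=
      (hasDerivAt_eval_mul_exp_theta_sq _ t z).congr_deriv
        (by rw [eval_derivative_wronskian_add_mul (heq z) (hr z)]; ring)
    simpa [theta] using rayIntegral_eq_neg_of_hasDerivAt hprimitive (hintegrable hk)
      (tendsto_eval_mul_exp_theta_sq_ray _ t (rayDir_pow_three_of_odd hk))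
  refine ⟨?_, (hrayIntegral (by decide)).trans (hrayIntegral (by decide)).symm,
    (hrayIntegral (by decide)).trans (hrayIntegral (by decide)).symm⟩
  rintro k (rfl | rfl | rfl) <;> exact hintegrable (by decide)

/-- if λ is a repeated eigenvalue (there is a polynomial generalized
eigenvector r), then the ray integrals of F² = (p·e^θ)² converge and are all equal,
i.e. both wedge-contour integrals of F² vanish. -/
theorem repeated_eigenvalue_gives_vanishing_integrals
    (n : ℕ) (t lam : ℂ) (p : Polynomial ℂ) (hmonic : p.Monic) (hdeg : p.natDegree = n)
    (heq : ∀ x : ℂ, (p.derivative.derivative).eval x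
        + (2 * x ^ 2 + t) * p.derivative.eval x
        - 2 * (n : ℂ) * x * p.eval x = lam * p.eval x)
    (r : Polynomial ℂ)
    (hr : ∀ x : ℂ, (r.derivative.derivative).eval x
        + (2 * x ^ 2 + t) * r.derivative.eval x
        - 2 * (n : ℂ) * x * r.eval x - lam * r.eval x = p.eval x) :
    (∀ k ∈ ({1, 3, 5} : Set ℕ),
      MeasureTheory.IntegrableOn
        (fun s : ℝ => (p.eval ((s : ℂ) * rayDir k)
            * Complex.exp (((s : ℂ) * rayDir k) ^ 3 / 3 + t * ((s : ℂ) * rayDir k) / 2)) ^ 2)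
        (Set.Ioi 0)) ∧
    rayIntegral 1 (fun x => (p.eval x * Complex.exp (x ^ 3 / 3 + t * x / 2)) ^ 2)
      = rayIntegral 3 (fun x => (p.eval x * Complex.exp (x ^ 3 / 3 + t * x / 2)) ^ 2) ∧
    rayIntegral 3 (fun x => (p.eval x * Complex.exp (x ^ 3 / 3 + t * x / 2)) ^ 2)
      = rayIntegral 5 (fun x => (p.eval x * Complex.exp (x ^ 3 / 3 + t * x / 2)) ^ 2) :=
  repeated_eigenvalue_gives_vanishing_integrals_general n t lam p heq r hr
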